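/- arXiv:2209.12438 — 2 statements merged into one kernel-verified Lean document; each statement's English description precedes it below -/
import Mathlib

section
/- Let G be a finite simple connected prime graph with diam(G) ≥ 2. Then there exist extremities x and y of G such that d(x,y) = diam(G). -/
variable {V : Type*}

/-- The closed neighbourhood `N[v]` of a vertex. -/
def closedNbhd (G : SimpleGraph V) (v : V) : Set V := insert v (G.neighborSet v)

/-- `N[S] = ⋃_{v ∈ S} N[v]`. -/
def closedNbhdSet (G : SimpleGraph V) (S : Set V) : Set V := ⋃ v ∈ S, closedNbhd G v

/-- A vertex `v` is an extremity if the subgraph induced on `V \ N[v]` is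
connected (possibly empty). -/
def IsExtremity (G : SimpleGraph V) (v : V) : Prop :=
  (G.induce (closedNbhd G v)ᶜ).Preconnected

/-- `M` is a module: every vertex outside `M` is adjacent to all of `M` or none of `M`. -/
def IsModuleSet (G : SimpleGraph V) (M : Set V) : Prop :=
  ∀ z ∉ M, ∀ x ∈ M, ∀ y ∈ M, (G.Adj z x ↔ G.Adj z y)

/-- A graph is prime if its only modules are `∅`, `V` and the singletons. -/
def IsPrimeGraph (G : SimpleGraph V) : Prop :=
  ∀ M : Set V, IsModuleSet G M → M = ∅ ∨ M = Set.univ ∨ ∃ v, M = {v}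

/-- Eccentricity of a vertex in a finite graph. -/
noncomputable def ecc [Fintype V] (G : SimpleGraph V) (u : V) : ℕ :=
  Finset.univ.sup (G.dist u)

/-- Diameter of a finite graph. -/
noncomputable def gdiam [Fintype V] (G : SimpleGraph V) : ℕ :=
  Finset.univ.sup fun u => ecc G u

/-- `u ⊥_w v`: vertices `u` and `v` lie in different connected components of the
subgraph induced on `V \ N[w]`. -/
def Perp (G : SimpleGraph V) (w u v : V) : Prop :=
  u ∉ closedNbhd G w ∧ v ∉ closedNbhd G w ∧
    ¬ ∃ p : G.Walk u v, ∀ z ∈ p.support, z ∉ closedNbhd G w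

/-- `S` is `u`-transitive: for every `x ∈ S` and vertex `y` distinct from and
nonadjacent to `x`, `x ⊥_y u` implies `y ∈ S`. -/
def UTransitive (G : SimpleGraph V) (u : V) (S : Set V) : Prop :=
  ∀ x ∈ S, ∀ y : V, y ≠ x → ¬ G.Adj x y → Perp G y x u → y ∈ S

/-- `S` is a dominating set: every vertex lies in `N[S]`. -/
def IsDominatingSet (G : SimpleGraph V) (S : Set V) : Prop :=
  ∀ v : V, ∃ s ∈ S, v ∈ closedNbhd G s

/-- `D` is a dominating target: every superset of `D` inducing a connected
subgraph is a dominating set. -/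
def IsDomTarget (G : SimpleGraph V) (D : Set V) : Prop :=
  ∀ S : Set V, D ⊆ S → (G.induce S).Connected → IsDominatingSet G S

/-- An asteroidal set: an independent set `A` such that for every `a ∈ A`, all
vertices of `A \ {a}` lie in a single connected component of the subgraph
induced on `V \ N[a]`. -/
def IsAsteroidalSet (G : SimpleGraph V) (A : Set V) : Prop :=
  (A.Pairwise fun x y => ¬ G.Adj x y) ∧
  ∀ a ∈ A, ∀ b ∈ A, ∀ c ∈ A, b ≠ a → c ≠ a →
    ∃ p : G.Walk b c, ∀ z ∈ p.support, z ∉ closedNbhd G a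

/-!
Fix a vertex `u` of eccentricity `e ≥ 2`, and for a vertex `y` let `C(y)` be the component of
`u` in `G - N[y]`. Among the vertices `y` with `d(u, y) = e` choose one with `C(y)` largest and
put `C = C(y)`. Every path from `u` leaving `N[C]` passes through `N[C] \ C ⊆ N[y]`, so every
`x ∉ N[C]` is also at distance `e` from `u`; as `C` avoids `N[x]`, maximality forces `C(x) = C`,
whence `N[C] \ C ⊆ N(x)`. Thus `V \ N[C]` is a module containing `y` and missing `u`. If `y` were
not an extremity, a vertex of `G - N[y]` outside `C` would be a second element of this module,
contradicting primality. Applying this twice, from a vertex of maximal eccentricity and then from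
the extremity found, gives the theorem.
-/

def reachAvoiding (G : SimpleGraph V) (S : Set V) (u : V) : Set V :=
  {z | ∃ p : G.Walk u z, ∀ a ∈ p.support, a ∉ S}

section

variable {G : SimpleGraph V} {S T : Set V} {u v w z : V}

lemma mem_closedNbhd_comm : v ∈ closedNbhd G w ↔ w ∈ closedNbhd G v := by
  simp only [closedNbhd, Set.mem_insert_iff, SimpleGraph.mem_neighborSet, G.adj_comm, eq_comm]

lemma mem_closedNbhdSet_of_adj {C : Set V} (hw : w ∈ C) (h : G.Adj w z) :
    z ∈ closedNbhdSet G C :=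
  Set.mem_biUnion hw (Or.inr h)

lemma dist_le_one_of_mem_closedNbhd (h : v ∈ closedNbhd G w) : G.dist v w ≤ 1 := by
  rcases h with rfl | h
  · simp
  · exact (SimpleGraph.dist_eq_one_iff_adj.mpr h.symm).le

lemma self_mem_reachAvoiding (hu : u ∉ S) : u ∈ reachAvoiding G S u :=
  ⟨.nil, by simpa using hu⟩

lemma notMem_of_mem_reachAvoiding (hz : z ∈ reachAvoiding G S u) : z ∉ S := by
  obtain ⟨p, hp⟩ := hz
  exact hp z p.end_mem_support

lemma mem_reachAvoiding_of_mem_support {p : G.Walk u z} (hp : ∀ a ∈ p.support, a ∉ S)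
    {a : V} (ha : a ∈ p.support) : a ∈ reachAvoiding G S u := by
  classical
  exact ⟨p.takeUntil a ha, fun b hb => hp b (p.support_takeUntil_subset_support ha hb)⟩

lemma mem_reachAvoiding_of_adj (hz : z ∈ reachAvoiding G S u) (h : G.Adj z w) (hw : w ∉ S) :
    w ∈ reachAvoiding G S u := by
  obtain ⟨p, hp⟩ := hz
  refine ⟨p.concat h, fun a ha => ?_⟩
  rw [SimpleGraph.Walk.support_concat, List.mem_append, List.mem_singleton] at ha
  rcases ha with ha | rfl
  exacts [hp a ha, hw]

lemma reachAvoiding_subset (h : Disjoint (reachAvoiding G S u) T) :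
    reachAvoiding G S u ⊆ reachAvoiding G T u := by
  rintro z ⟨p, hp⟩
  exact ⟨p, fun a ha => h.notMem_of_mem_left (mem_reachAvoiding_of_mem_support hp ha)⟩

lemma mem_of_mem_closedNbhdSet_reachAvoiding (hz : z ∈ closedNbhdSet G (reachAvoiding G S u))
    (hz' : z ∉ reachAvoiding G S u) : z ∈ S := by
  obtain ⟨c, hc, hzc⟩ := Set.mem_iUnion₂.mp hz
  rcases hzc with rfl | h
  · exact absurd hc hz'
  · by_contra hS
    exact hz' (mem_reachAvoiding_of_adj hc h hS)

lemma preconnected_induce_compl_of_subset_reachAvoiding (h : Sᶜ ⊆ reachAvoiding G S u) :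
    (G.induce Sᶜ).Preconnected := by
  rintro ⟨a, ha⟩ ⟨b, hb⟩
  obtain ⟨p, hp⟩ := h ha
  obtain ⟨q, hq⟩ := h hb
  have hpq : ∀ x ∈ (p.reverse.append q).support, x ∈ Sᶜ := by
    intro x hx
    rw [SimpleGraph.Walk.mem_support_append_iff, SimpleGraph.Walk.support_reverse,
      List.mem_reverse] at hx
    exact hx.elim (hp x) (hq x)
  exact ((p.reverse.append q).induce Sᶜ hpq).reachable

/-- A shortest path from `u` out of `N[C]` first enters `N[C] \ C ⊆ N[v]`, one step from `v`. -/
lemma dist_le_dist_of_notMem_closedNbhdSet (hG : G.Connected) (hu : u ∉ closedNbhd G v)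
    (hz : z ∉ closedNbhdSet G (reachAvoiding G (closedNbhd G v) u)) :
    G.dist u v ≤ G.dist u z := by
  classical
  set C := reachAvoiding G (closedNbhd G v) u
  obtain ⟨p, hp⟩ := hG.exists_walk_length_eq_dist u z
  obtain ⟨d, hd, hdC, hdC'⟩ := p.exists_boundary_dart C (self_mem_reachAvoiding hu)
    (fun hzC => hz (Set.mem_biUnion hzC (Set.mem_insert z _)))
  have hb : d.snd ∈ closedNbhdSet G C := mem_closedNbhdSet_of_adj hdC d.adj
  have hbv : d.snd ∈ closedNbhd G v := mem_of_mem_closedNbhdSet_reachAvoiding hb hdC'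
  have hbs : d.snd ∈ p.support := p.dart_snd_mem_support_of_mem_darts hd
  have hlt : G.dist u d.snd < p.length :=
    (SimpleGraph.dist_le _).trans_lt
      (SimpleGraph.Walk.length_takeUntil_lt_length hbs (fun h => hz (h ▸ hb)))
  have := dist_le_one_of_mem_closedNbhd hbv
  have := hG.dist_triangle (u := u) (v := d.snd) (w := v)
  omega

end

lemma isModuleSet_compl_closedNbhdSet {G : SimpleGraph V} {C : Set V}
    (h : ∀ x ∉ closedNbhdSet G C, closedNbhdSet G C \ C ⊆ closedNbhd G x) :
    IsModuleSet G (closedNbhdSet G C)ᶜ := by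
  have key : ∀ z ∈ closedNbhdSet G C, ∀ x ∉ closedNbhdSet G C, (G.Adj z x ↔ z ∉ C) := by
    intro z hz x hx
    refine ⟨fun hzx hzC => hx (mem_closedNbhdSet_of_adj hzC hzx), fun hzC => ?_⟩
    rcases h x hx ⟨hz, hzC⟩ with rfl | hxz
    exacts [absurd hz hx, hxz.symm]
  intro z hz x hx y hy
  rw [Set.notMem_compl_iff] at hz
  rw [key z hz x hx, key z hz y hy]

lemma IsPrimeGraph.eq_of_isModuleSet {G : SimpleGraph V} (hprime : IsPrimeGraph G) {M : Set V}
    (hM : IsModuleSet G M) {a x y : V} (ha : a ∉ M) (hx : x ∈ M) (hy : y ∈ M) : x = y := by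
  rcases hprime M hM with rfl | rfl | ⟨v, rfl⟩
  · exact absurd hx (Set.notMem_empty x)
  · exact absurd (Set.mem_univ a) ha
  · exact hx.trans hy.symm

lemma dist_le_ecc [Fintype V] (G : SimpleGraph V) (u w : V) : G.dist u w ≤ ecc G u :=
  Finset.le_sup (Finset.mem_univ w)

lemma ecc_le_gdiam [Fintype V] (G : SimpleGraph V) (u : V) : ecc G u ≤ gdiam G :=
  Finset.le_sup (f := ecc G) (Finset.mem_univ u)

lemma exists_isExtremity_dist_eq_ecc [Fintype V] {G : SimpleGraph V} (hG : G.Connected)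
    (hprime : IsPrimeGraph G) {u : V} (hu : 2 ≤ ecc G u) :
    ∃ y, IsExtremity G y ∧ G.dist u y = ecc G u := by
  classical
  have : Nonempty V := hG.nonempty
  obtain ⟨y₀, -, hy₀⟩ :=
    Finset.exists_mem_eq_sup Finset.univ Finset.univ_nonempty (G.dist u)
  obtain ⟨y, hy, hmax⟩ := Finset.exists_max_image
    (Finset.univ.filter fun y => G.dist u y = ecc G u)
    (fun y => (reachAvoiding G (closedNbhd G y) u).ncard)
    ⟨y₀, Finset.mem_filter.mpr ⟨Finset.mem_univ _, hy₀.symm⟩⟩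
  simp only [Finset.mem_filter, Finset.mem_univ, true_and] at hy hmax
  refine ⟨y, ?_, hy⟩
  set C := reachAvoiding G (closedNbhd G y) u
  have huy : u ∉ closedNbhd G y := fun h => by
    have := dist_le_one_of_mem_closedNbhd h
    omega
  have hfar : ∀ x ∉ closedNbhdSet G C, G.dist u x = ecc G u := fun x hx =>
    le_antisymm (dist_le_ecc G u x) (hy ▸ dist_le_dist_of_notMem_closedNbhdSet hG huy hx)
  have hC : ∀ x ∉ closedNbhdSet G C, reachAvoiding G (closedNbhd G x) u = C := by
    intro x hx
    have hsub : C ⊆ reachAvoiding G (closedNbhd G x) u := reachAvoiding_subset <|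
      Set.disjoint_left.mpr fun a ha hax => hx (Set.mem_biUnion ha (mem_closedNbhd_comm.mp hax))
    exact (Set.eq_of_subset_of_ncard_le hsub (hmax x (hfar x hx))).symm
  have hmod : IsModuleSet G (closedNbhdSet G C)ᶜ := by
    refine isModuleSet_compl_closedNbhdSet fun x hx w hw => ?_
    rw [← hC x hx] at hw
    exact mem_of_mem_closedNbhdSet_reachAvoiding hw.1 hw.2
  by_contra hext
  obtain ⟨w, hwy, hwC⟩ : ∃ w ∉ closedNbhd G y, w ∉ C := by
    by_contra! h
    exact hext (preconnected_induce_compl_of_subset_reachAvoiding h)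
  have hyM : y ∉ closedNbhdSet G C := fun h => by
    obtain ⟨c, hc, hyc⟩ := Set.mem_iUnion₂.mp h
    exact notMem_of_mem_reachAvoiding hc (mem_closedNbhd_comm.mp hyc)
  have hwM : w ∉ closedNbhdSet G C := fun h =>
    hwy (mem_of_mem_closedNbhdSet_reachAvoiding h hwC)
  have huM : u ∈ closedNbhdSet G C :=
    Set.mem_biUnion (self_mem_reachAvoiding huy) (Set.mem_insert u _)
  have hwy' : w = y := hprime.eq_of_isModuleSet hmod (not_not.mpr huM) hwM hyM
  exact hwy (hwy' ▸ Set.mem_insert w _)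

theorem stmt_3 [Fintype V] (G : SimpleGraph V) (hG : G.Connected)
    (hprime : IsPrimeGraph G) (hdiam : 2 ≤ gdiam G) :
    ∃ x y : V, IsExtremity G x ∧ IsExtremity G y ∧ G.dist x y = gdiam G := by
  have : Nonempty V := hG.nonempty
  obtain ⟨u, -, hu⟩ := Finset.exists_mem_eq_sup Finset.univ Finset.univ_nonempty (ecc G)
  replace hu : ecc G u = gdiam G := hu.symm
  obtain ⟨y, hy_ext, hy⟩ := exists_isExtremity_dist_eq_ecc hG hprime (hu ▸ hdiam)
  have hy_ecc : ecc G y = gdiam G := le_antisymm (ecc_le_gdiam G y)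
    (hu ▸ hy ▸ G.dist_comm ▸ dist_le_ecc G y u)
  obtain ⟨x, hx_ext, hx⟩ := exists_isExtremity_dist_eq_ecc hG hprime (hy_ecc ▸ hdiam)
  exact ⟨x, y, hx_ext, hy_ext, by rw [G.dist_comm, hx, hy_ecc]⟩
end

section
/- Let G be a finite simple connected prime graph with at least 3 vertices, let u be a vertex of G, and let S ⊆ V be a u-transitive set such that V ≠ S ∪ N[u]. Then there exists an extremity v of G with v ∉ S, v ∉ N[u], and d(u,v) = max{ d(u,w) : w ∈ V \ S }. -/
variable {V : Type*}

/-! Let `W` be the set of vertices outside `S` at maximal distance from `u`; this distance is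
at least 2 because `S ∪ N[u] ≠ V`. For `v ∈ W`, the components of `G - N[v]` not containing
`u` lie in `W`: they avoid `S` by `u`-transitivity, and every path from `u` into them crosses
`N[v]`, so they are at least as far from `u` as `v`. If no vertex of `W` were an extremity,
every `v ∈ W` would have such a component, and a terminal strongly connected class of the
relation "`b` lies in a component of `G - N[a]` away from `u`" would be a module with at least
two vertices that misses `u`, contradicting primality. -/

open SimpleGraph Relation

theorem Relation.exists_reflTransGen_terminal {α : Type*} [Finite α] (r : α → α → Prop)
    (a : α) :
    ∃ b, ReflTransGen r a b ∧ ∀ c, ReflTransGen r b c → ReflTransGen r c b := by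
  obtain ⟨b, hab, hmin⟩ := Set.exists_min_image {b | ReflTransGen r a b}
    (fun b => {c | ReflTransGen r b c}.ncard) (Set.toFinite _) ⟨a, .refl⟩
  refine ⟨b, hab, fun c hbc => ?_⟩
  have hsub : {d | ReflTransGen r c d} ⊆ {d | ReflTransGen r b d} := fun d hcd => hbc.trans hcd
  have heq := Set.eq_of_subset_of_ncard_le hsub (hmin c (hab.trans hbc)) (Set.toFinite _)
  exact (Set.ext_iff.1 heq b).2 .refl

section

variable {G : SimpleGraph V}

@[simp]
theorem mem_closedNbhd {a b : V} : b ∈ closedNbhd G a ↔ b = a ∨ G.Adj a b := Iff.rfl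

theorem mem_closedNbhd_comm_s12 {a b : V} : b ∈ closedNbhd G a ↔ a ∈ closedNbhd G b := by
  simp only [mem_closedNbhd, eq_comm, G.adj_comm]

theorem SimpleGraph.Connected.notMem_closedNbhd_iff_two_le_dist (hG : G.Connected) {u w : V} :
    w ∉ closedNbhd G u ↔ 2 ≤ G.dist u w := by
  simp only [mem_closedNbhd, not_or]
  refine ⟨fun ⟨hne, hnadj⟩ => hG.one_lt_dist_of_ne_of_not_adj (Ne.symm hne) hnadj, ?_⟩
  intro h2
  refine ⟨?_, fun hadj => ?_⟩
  · rintro rfl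
    simp at h2
  · rw [dist_eq_one_iff_adj.mpr hadj] at h2
    omega

theorem SimpleGraph.Connected.dist_le_dist_add_one_of_mem_closedNbhd (hG : G.Connected)
    {u v z : V} (hz : z ∈ closedNbhd G v) : G.dist u v ≤ G.dist u z + 1 := by
  rcases hz with rfl | hadj
  · exact Nat.le_succ _
  · simpa [dist_eq_one_iff_adj.mpr hadj.symm] using hG.dist_triangle (u := u) (v := z) (w := v)

theorem SimpleGraph.Walk.reachable_induce {s : Set V} {a b : V} (p : G.Walk a b)
    (hp : ∀ z ∈ p.support, z ∈ s) :
    (G.induce s).Reachable ⟨a, hp a p.start_mem_support⟩ ⟨b, hp b p.end_mem_support⟩ :=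
  (p.connected_induce_support.preconnected ⟨a, p.start_mem_support⟩
    ⟨b, p.end_mem_support⟩).map (G.induceHomOfLE hp).toHom

def farSet (G : SimpleGraph V) (u v : V) : Set V :=
  {x | x ∉ closedNbhd G v ∧ ¬ ∃ p : G.Walk u x, ∀ z ∈ p.support, z ∉ closedNbhd G v}

variable {u v x : V}

theorem isExtremity_of_farSet_eq_empty (h : farSet G u v = ∅) : IsExtremity G v := by
  have hreach : ∀ x ∉ closedNbhd G v,
      ∃ p : G.Walk u x, ∀ z ∈ p.support, z ∉ closedNbhd G v := by
    intro x hx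
    by_contra hp
    exact (Set.ext_iff.1 h x).1 ⟨hx, hp⟩
  rintro ⟨x, hx⟩ ⟨y, hy⟩
  obtain ⟨p, hp⟩ := hreach x hx
  obtain ⟨q, hq⟩ := hreach y hy
  have hpq : ∀ z ∈ (p.reverse.append q).support, z ∈ (closedNbhd G v)ᶜ := by
    intro z hz
    rw [Walk.mem_support_append_iff, Walk.support_reverse, List.mem_reverse] at hz
    exact hz.elim (hp z) (hq z)
  exact (p.reverse.append q).reachable_induce hpq

theorem adj_of_adj_mem_farSet {b z : V} (hb : b ∈ farSet G u v) (hz : z ∉ farSet G u v)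
    (hzv : z ≠ v) (hzb : G.Adj z b) : G.Adj z v := by
  by_contra hzv'
  have hzN : z ∉ closedNbhd G v := by
    simpa [hzv] using fun h : G.Adj v z => hzv' h.symm
  refine hz ⟨hzN, fun ⟨p, hp⟩ => hb.2 ⟨p.concat hzb, fun y hy => ?_⟩⟩
  rw [Walk.support_concat, List.mem_append, List.mem_singleton] at hy
  rcases hy with hy | rfl
  exacts [hp y hy, hb.1]

theorem perp_of_mem_farSet (hu : u ∉ closedNbhd G v) (hx : x ∈ farSet G u v) : Perp G v x u :=
  ⟨hx.1, hu, fun ⟨p, hp⟩ => hx.2 ⟨p.reverse, fun z hz => hp z (by simpa using hz)⟩⟩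

theorem UTransitive.notMem_of_mem_farSet {S : Set V} (hS : UTransitive G u S) (hv : v ∉ S)
    (hu : u ∉ closedNbhd G v) (hx : x ∈ farSet G u v) : x ∉ S := by
  intro hxS
  have hxv : x ≠ v ∧ ¬ G.Adj v x := by simpa using hx.1
  exact hv (hS x hxS v (Ne.symm hxv.1) (fun h => hxv.2 h.symm) (perp_of_mem_farSet hu hx))

theorem SimpleGraph.Connected.dist_le_dist_of_mem_farSet (hG : G.Connected)
    (hx : x ∈ farSet G u v) : G.dist u v ≤ G.dist u x := by
  classical
  obtain ⟨p, hp⟩ := hG.exists_walk_length_eq_dist u x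
  obtain ⟨z, hz, hzv⟩ : ∃ z ∈ p.support, z ∈ closedNbhd G v := by
    by_contra! h
    exact hx.2 ⟨p, h⟩
  have hzx : z ≠ x := by
    rintro rfl
    exact hx.1 hzv
  calc G.dist u v ≤ G.dist u z + 1 := hG.dist_le_dist_add_one_of_mem_closedNbhd hzv
    _ ≤ G.dist u z + G.dist z x := by gcongr; exact hG.pos_dist_of_ne hzx
    _ ≤ (p.takeUntil z hz).length + (p.dropUntil z hz).length :=
      add_le_add (dist_le _) (dist_le _)
    _ = G.dist u x := by rw [← Walk.length_append, p.take_spec hz, hp]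

def farthestOutside (G : SimpleGraph V) (u : V) (S : Set V) : Set V :=
  {w | w ∉ S ∧ ∀ w' ∉ S, G.dist u w' ≤ G.dist u w}

theorem farSet_subset_farthestOutside {S : Set V} (hG : G.Connected) (hS : UTransitive G u S)
    (hv : v ∈ farthestOutside G u S) (hu : u ∉ closedNbhd G v) :
    farSet G u v ⊆ farthestOutside G u S := fun _ hx =>
  ⟨hS.notMem_of_mem_farSet hv.1 hu hx,
    fun w hw => (hv.2 w hw).trans (hG.dist_le_dist_of_mem_farSet hx)⟩

theorem isModuleSet_setOf_reflTransGen {r : V → V → Prop}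
    (hr : ∀ a b z, r a b → ¬ r a z → z ≠ a → G.Adj z b → G.Adj z a)
    (hv : ∀ w, ReflTransGen r v w → ReflTransGen r w v) :
    IsModuleSet G {w | ReflTransGen r v w} := by
  have key : ∀ z, ¬ ReflTransGen r v z → ∀ a b, ReflTransGen r v a → ReflTransGen r a b →
      G.Adj z b → G.Adj z a := by
    intro z hz a b ha hab
    induction hab with
    | refl => exact id
    | @tail c _ hac hcd ih =>
      have hvc := ha.trans hac
      have hzc : z ≠ c := by
        rintro rfl
        exact hz hvc
      exact fun hadj => ih (hr _ _ z hcd (fun h => hz (hvc.tail h)) hzc hadj)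
  intro z hz x hx y hy
  exact ⟨key z hz y x hy ((hv y hy).trans hx), key z hz x y hx ((hv x hx).trans hy)⟩

theorem IsPrimeGraph.exists_farSet_eq_empty [Finite V] (hprime : IsPrimeGraph G) {W : Set V}
    (hW : W.Nonempty) (huW : u ∉ W) (hclosed : ∀ v ∈ W, farSet G u v ⊆ W) :
    ∃ v ∈ W, farSet G u v = ∅ := by
  by_contra! hne
  let r : V → V → Prop := fun a b => b ∈ farSet G u a
  have hrW : ∀ a b, ReflTransGen r a b → a ∈ W → b ∈ W := by
    intro a b hab ha
    induction hab with
    | refl => exact ha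
    | tail _ hbc ih => exact hclosed _ ih hbc
  obtain ⟨a, ha⟩ := hW
  obtain ⟨v, hav, hv⟩ := exists_reflTransGen_terminal r a
  have hvW := hrW a v hav ha
  have hmod := isModuleSet_setOf_reflTransGen
    (fun _ _ _ hb hz hza hzb => adj_of_adj_mem_farSet hb hz hza hzb) hv
  obtain ⟨b, hb⟩ := hne v hvW
  rcases hprime _ hmod with h | h | ⟨w, h⟩
  · exact (Set.ext_iff.1 h v).1 .refl
  · exact huW (hrW v u ((Set.ext_iff.1 h u).2 trivial) hvW)
  · have hvw : v = w := (Set.ext_iff.1 h v).1 .refl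
    have hbw : b = w := (Set.ext_iff.1 h b).1 (.single hb)
    exact hb.1 (by simp [hvw, hbw])

end

theorem stmt_12_general [Fintype V] (G : SimpleGraph V) (hG : G.Connected)
    (hprime : IsPrimeGraph G)
    (u : V) (S : Set V) (hS : UTransitive G u S)
    (hne : S ∪ closedNbhd G u ≠ Set.univ) :
    ∃ v : V, IsExtremity G v ∧ v ∉ S ∧ v ∉ closedNbhd G u ∧
      ∀ w : V, w ∉ S → G.dist u w ≤ G.dist u v := by
  obtain ⟨w₀, hw₀S, hw₀u⟩ : ∃ w₀, w₀ ∉ S ∧ w₀ ∉ closedNbhd G u := by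
    by_contra! h
    exact hne (Set.eq_univ_of_forall fun w => (em (w ∈ S)).elim .inl (.inr ∘ h w))
  have hfar : ∀ v ∈ farthestOutside G u S, v ∉ closedNbhd G u := fun v hv =>
    hG.notMem_closedNbhd_iff_two_le_dist.2
      ((hG.notMem_closedNbhd_iff_two_le_dist.1 hw₀u).trans (hv.2 w₀ hw₀S))
  have hW : (farthestOutside G u S).Nonempty := by
    obtain ⟨v, hv, hmax⟩ :=
      Set.exists_max_image Sᶜ (G.dist u) (Set.toFinite _) ⟨w₀, hw₀S⟩
    exact ⟨v, hv, hmax⟩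
  obtain ⟨v, hv, hv_empty⟩ := hprime.exists_farSet_eq_empty hW (fun hu => hfar u hu (by simp))
    fun v hv => farSet_subset_farthestOutside hG hS hv (mem_closedNbhd_comm_s12.not.1 (hfar v hv))
  exact ⟨v, isExtremity_of_farSet_eq_empty hv_empty, hv.1, hfar v hv, hv.2⟩

theorem stmt_12 [Fintype V] (G : SimpleGraph V) (hG : G.Connected)
    (hprime : IsPrimeGraph G) (hcard : 3 ≤ Fintype.card V)
    (u : V) (S : Set V) (hS : UTransitive G u S)
    (hne : S ∪ closedNbhd G u ≠ Set.univ) :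
    ∃ v : V, IsExtremity G v ∧ v ∉ S ∧ v ∉ closedNbhd G u ∧
      ∀ w : V, w ∉ S → G.dist u w ≤ G.dist u v :=
  stmt_12_general G hG hprime u S hS hne
end
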